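/- arXiv:1903.03818 — 2 statements merged into one kernel-verified Lean document; each statement's English description precedes it below -/
import Mathlib

section
/- Solomon's identity for GL(n, F_q): Σ_{J ⊆ Π} (-1)^{|J|} |GL(n,F_q) : P_J| = q^{n(n-1)/2}, where Π is the set of n-1 fundamental roots and P_J ranges over the standard parabolic subgroups. -/
/-!
Cutting `{0, …, n-1}` into blocks at the walls `Jᶜ`, `P_J` consists of the invertible matrices that
are block upper triangular for these blocks. Such a matrix amounts to invertible diagonal blocks
and arbitrary entries above them, so `|P_J| = q^(n choose 2) ∏_j (q^(s_j) - 1)`, where `s_j` is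
the position of `j` in its block, and `|GL_n : P_J|` is the Gaussian multinomial coefficient of the
block sizes. Grouping the alternating sum of these coefficients by the last wall gives a recursion
in `n` whose step is the `q`-binomial theorem at `x = -1`,
`∑_j (-1)^j q^(j choose 2) [n choose j]_q = 0`; its solution is `q^(n choose 2)`.
-/

namespace ParabolicGL

variable (n : ℕ) {F : Type*} [Field F]

/-- Indices `i j` of `Fin n` are separated by a wall of the subset `I` of the `n - 1`
fundamental roots: some `k ∉ I` lies between them. -/
def Separated (I : Finset (Fin (n - 1))) (i j : Fin n) : Prop :=
  ∃ k : Fin (n - 1), k ∉ I ∧ min i.val j.val ≤ k.val ∧ k.val < max i.val j.val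

/-- The standard parabolic subgroup `P_J` of `GL(n, F)`: block upper triangular
matrices for the block decomposition determined by `J`. -/
def P (I : Finset (Fin (n - 1))) : Set (Matrix.GeneralLinearGroup (Fin n) F) :=
  {A | ∀ i j : Fin n, j < i → Separated n I i j →
    (A : Matrix (Fin n) (Fin n) F) i j = 0}

end ParabolicGL

open Finset

namespace ParabolicGL

section QAnalogues

variable {R : Type*} [CommRing R] (q : R)

/-- `(q - 1)^m [m]_q!`; over `𝔽_q`, `|GL_m| = q^(m choose 2) qFact q m`. -/
def qFact (m : ℕ) : R := ∏ i ∈ range m, (q ^ (i + 1) - 1)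

@[simp] lemma qFact_zero : qFact q 0 = 1 := prod_range_zero _

lemma qFact_succ (m : ℕ) : qFact q (m + 1) = qFact q m * (q ^ (m + 1) - 1) :=
  prod_range_succ _ _

def gaussBinom : ℕ → ℕ → R
  | 0, 0 => 1
  | 0, _ + 1 => 0
  | _ + 1, 0 => 1
  | n + 1, k + 1 => gaussBinom n k + q ^ (k + 1) * gaussBinom n (k + 1)

@[simp] lemma gaussBinom_zero_right : ∀ n, gaussBinom q n 0 = 1
  | 0 => rfl
  | _ + 1 => rfl

lemma gaussBinom_succ_succ (n k : ℕ) :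
    gaussBinom q (n + 1) (k + 1) = gaussBinom q n k + q ^ (k + 1) * gaussBinom q n (k + 1) :=
  rfl

lemma gaussBinom_of_lt : ∀ {n k : ℕ}, n < k → gaussBinom q n k = 0
  | 0, _ + 1, _ => rfl
  | n + 1, k + 1, h => by
    rw [gaussBinom_succ_succ, gaussBinom_of_lt (by omega), gaussBinom_of_lt (by omega)]
    ring

theorem gaussBinom_mul_qFact_mul_qFact :
    ∀ {n k : ℕ}, k ≤ n → gaussBinom q n k * (qFact q k * qFact q (n - k)) = qFact q n
  | n, 0, _ => by simp
  | n + 1, k + 1, h => by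
    rcases (Nat.le_of_succ_le_succ h).eq_or_lt with rfl | hlt
    · have h₁ := gaussBinom_mul_qFact_mul_qFact (le_refl k)
      rw [Nat.sub_self, qFact_zero, mul_one] at h₁
      rw [Nat.sub_self, qFact_zero, mul_one, gaussBinom_succ_succ,
        gaussBinom_of_lt q (Nat.lt_succ_self k), qFact_succ]
      linear_combination (q ^ (k + 1) - 1) * h₁
    · obtain ⟨d, rfl⟩ := Nat.exists_eq_add_of_lt hlt
      have h₁ := gaussBinom_mul_qFact_mul_qFact (show k ≤ k + d + 1 by omega)
      have h₂ := gaussBinom_mul_qFact_mul_qFact (show k + 1 ≤ k + d + 1 by omega)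
      rw [show k + d + 1 - k = d + 1 by omega, qFact_succ q d] at h₁
      rw [show k + d + 1 - (k + 1) = d by omega, qFact_succ q k] at h₂
      rw [show k + d + 1 + 1 - (k + 1) = d + 1 by omega, gaussBinom_succ_succ,
        qFact_succ q (k + d + 1), qFact_succ q k, qFact_succ q d]
      linear_combination (q ^ (k + 1) - 1) * h₁ + q ^ (k + 1) * (q ^ (d + 1) - 1) * h₂

/-- The `q`-binomial theorem at `x = -1`. -/
theorem sum_neg_one_pow_mul_gaussBinom (n : ℕ) :
    ∑ j ∈ range (n + 2), (-1) ^ j * q ^ j.choose 2 * gaussBinom q (n + 1) j = 0 := by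
  set g : ℕ → R := fun j => (-1) ^ j * q ^ (j.choose 2 + j) * gaussBinom q n j
  -- by the `q`-Pascal rule, the terms telescope
  have htel : ∀ j ∈ range (n + 1),
      (-1) ^ (j + 1) * q ^ (j + 1).choose 2 * gaussBinom q (n + 1) (j + 1) = g (j + 1) - g j := by
    intro j _
    simp only [g, gaussBinom_succ_succ, Nat.choose_succ_succ', Nat.choose_one_right, pow_add,
      pow_succ]
    ring
  rw [sum_range_succ', sum_congr rfl htel, sum_range_sub]
  simp [g, gaussBinom_of_lt q (Nat.lt_succ_self n)]

end QAnalogues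

section QAnaloguesField

variable {K : Type*} [Field K] {q : K}

lemma qFact_ne_zero (hq : ∀ k ≠ 0, q ^ k ≠ 1) (m : ℕ) : qFact q m ≠ 0 :=
  prod_ne_zero_iff.mpr fun i _ => sub_ne_zero.mpr (hq _ i.succ_ne_zero)

theorem sum_neg_one_pow_div_qFact_mul_qFact (hq : ∀ k ≠ 0, q ^ k ≠ 1) (n : ℕ) :
    ∑ j ∈ range (n + 2), (-1) ^ j * q ^ j.choose 2 / (qFact q j * qFact q (n + 1 - j)) = 0 := by
  have hterm : ∀ j ∈ range (n + 2),
      (-1) ^ j * q ^ j.choose 2 / (qFact q j * qFact q (n + 1 - j)) =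
        (-1) ^ j * q ^ j.choose 2 * gaussBinom q (n + 1) j / qFact q (n + 1) := by
    intro j hj
    rw [eq_div_iff (qFact_ne_zero hq _),
      ← gaussBinom_mul_qFact_mul_qFact q (Nat.lt_succ_iff.mp (mem_range.mp hj))]
    have := qFact_ne_zero hq j
    have := qFact_ne_zero hq (n + 1 - j)
    field_simp
  rw [sum_congr rfl hterm, ← sum_div, sum_neg_one_pow_mul_gaussBinom, zero_div]

end QAnaloguesField

lemma card_filter_fin_val (N : ℕ) (p : ℕ → Prop) [DecidablePred p] :
    #{i : Fin N | p i} = #{i ∈ range N | p i} := by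
  simp only [card_filter]
  exact Fin.sum_univ_eq_sum_range (fun i => if p i then 1 else 0) N

section BlockPos

variable {α : Type*} [DecidableEq α] (b : ℕ → α)

def blockPos (j : ℕ) : ℕ :=
  #{i ∈ range (j + 1) | b i = b j}

lemma blockPos_pos (j : ℕ) : 0 < blockPos b j :=
  card_pos.mpr ⟨j, mem_filter.mpr ⟨self_mem_range_succ j, rfl⟩⟩

variable {b}

lemma blockPos_lt_blockPos {i j : ℕ} (hij : i < j) (h : b i = b j) :
    blockPos b i < blockPos b j := by
  refine card_lt_card ⟨fun k hk => ?_, fun hsub => ?_⟩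
  · rw [mem_filter, mem_range] at hk ⊢
    exact ⟨by omega, hk.2.trans h⟩
  · have := mem_range.mp (mem_filter.mp (hsub (mem_filter.mpr ⟨self_mem_range_succ j, rfl⟩))).1
    omega

lemma prod_fibre_blockPos {M : Type*} [CommMonoid M] (g : ℕ → M) (N : ℕ) (c : α) :
    ∏ j ∈ univ.filter (fun j : Fin N => b j = c), g (blockPos b j) =
      ∏ t ∈ range #(univ.filter (fun j : Fin N => b j = c)), g (t + 1) := by
  set s := univ.filter (fun j : Fin N => b j = c)
  have hinj : Set.InjOn (fun j : Fin N => blockPos b j - 1) s := by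
    intro i hi j hj hij
    have hbij : b i = b j := (mem_filter.mp hi).2.trans (mem_filter.mp hj).2.symm
    have := blockPos_pos b i
    have := blockPos_pos b j
    rcases lt_trichotomy i j with h | h | h
    · have := blockPos_lt_blockPos h hbij
      simp only at hij
      omega
    · exact h
    · have := blockPos_lt_blockPos h hbij.symm
      simp only at hij
      omega
  have himage : s.image (fun j : Fin N => blockPos b j - 1) = range #s := by
    refine eq_of_subset_of_card_le (fun t ht => ?_) (by rw [card_range, card_image_of_injOn hinj])
    obtain ⟨j, hj, rfl⟩ := mem_image.mp ht
    have hle : blockPos b j ≤ #s := by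
      rw [card_filter_fin_val N (fun i => b i = c)]
      refine card_le_card fun i hi => ?_
      rw [mem_filter, mem_range] at hi ⊢
      exact ⟨by have := j.2; omega, hi.2.trans (mem_filter.mp hj).2⟩
    have := blockPos_pos b j
    rw [mem_range]
    omega
  rw [← himage, prod_image hinj]
  exact prod_congr rfl fun j _ => by rw [Nat.sub_add_cancel (blockPos_pos b j)]

end BlockPos

lemma card_lt_add_blockPos {β : Type*} [LinearOrder β] {b : ℕ → β} (hb : Monotone b) {N j : ℕ}
    (hj : j < N) :
    #{i : Fin N | b i < b j} + blockPos b j = j + 1 := by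
  have hlt : #{i : Fin N | b i < b j} = #{i ∈ range (j + 1) | b i < b j} := by
    rw [card_filter_fin_val N (fun i => b i < b j)]
    congr 1
    ext i
    simp only [mem_filter, mem_range]
    refine ⟨fun ⟨_, h⟩ => ⟨lt_of_not_ge fun hji => h.not_ge (hb (by omega)), h⟩,
      fun ⟨hi, h⟩ => ⟨by omega, h⟩⟩
  have heq : {i ∈ range (j + 1) | ¬ b i < b j} = {i ∈ range (j + 1) | b i = b j} :=
    filter_congr fun i hi => by
      rw [not_lt, le_antisymm_iff, and_iff_right (hb (Nat.lt_succ_iff.mp (mem_range.mp hi)))]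
  rw [hlt, blockPos, ← heq, card_filter_add_card_filter_not, card_range]

section Walls

/-- A wall at `k` separates the positions `k` and `k + 1`, so the blocks cut out by the walls `W`
are the fibres of `blockIndex W`. -/
def blockIndex (W : Finset ℕ) (i : ℕ) : ℕ := #{k ∈ W | k < i}

variable {W : Finset ℕ} {i j w : ℕ}

lemma blockIndex_add_card_walls_between (h : i ≤ j) :
    blockIndex W i + #{k ∈ W | i ≤ k ∧ k < j} = blockIndex W j := by
  have hsplit : {k ∈ W | k < j} = {k ∈ W | k < i} ∪ {k ∈ W | i ≤ k ∧ k < j} := by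
    ext k
    simp only [mem_union, mem_filter, ← and_or_left]
    exact and_congr_right fun _ => by omega
  rw [blockIndex, blockIndex, hsplit,
    card_union_of_disjoint (disjoint_filter.mpr fun k _ hk => by omega)]

lemma blockIndex_mono : Monotone (blockIndex W) := fun i j h => by
  rw [← blockIndex_add_card_walls_between h]
  exact Nat.le_add_right _ _

lemma blockIndex_lt_blockIndex_iff (h : i ≤ j) :
    blockIndex W i < blockIndex W j ↔ ∃ k ∈ W, i ≤ k ∧ k < j := by
  simp only [← blockIndex_add_card_walls_between (W := W) h, Nat.lt_add_right_iff_pos, card_pos,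
    filter_nonempty_iff]

lemma blockIndex_insert_of_le (h : i ≤ w) : blockIndex (insert w W) i = blockIndex W i := by
  rw [blockIndex, filter_insert, if_neg (by omega), blockIndex]

lemma blockIndex_insert_of_lt (hW : W ⊆ range w) (h : w < i) :
    blockIndex (insert w W) i = #W + 1 := by
  have hfilter : ∀ k ∈ W, k < i := fun k hk => (mem_range.mp (hW hk)).trans h
  have hw : w ∉ W := fun hw => (mem_range.mp (hW hw)).false
  rw [blockIndex, filter_insert, if_pos h, filter_true_of_mem hfilter, card_insert_of_notMem hw]

lemma blockPos_blockIndex_empty (j : ℕ) : blockPos (blockIndex ∅) j = j + 1 := by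
  simp [blockPos, blockIndex]

lemma blockPos_blockIndex_insert_of_le (h : j ≤ w) :
    blockPos (blockIndex (insert w W)) j = blockPos (blockIndex W) j := by
  refine congrArg card (filter_congr fun i hi => ?_)
  rw [blockIndex_insert_of_le (by rw [mem_range] at hi; omega), blockIndex_insert_of_le h]

lemma blockPos_blockIndex_insert_of_lt (hW : W ⊆ range w) (h : w < j) :
    blockPos (blockIndex (insert w W)) j = j - w := by
  have hbelow : ∀ i ≤ w, blockIndex (insert w W) i < #W + 1 := fun i hi => by
    rw [blockIndex_insert_of_le hi, Nat.lt_succ_iff]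
    exact card_filter_le _ _
  have hfibre : {i ∈ range (j + 1) | blockIndex (insert w W) i = blockIndex (insert w W) j} =
      Ico (w + 1) (j + 1) := by
    ext i
    rw [mem_filter, mem_range, mem_Ico, blockIndex_insert_of_lt hW h]
    constructor
    · rintro ⟨hij, hi⟩
      exact ⟨by_contra fun hiw => (hbelow i (by omega)).ne hi, hij⟩
    · rintro ⟨hwi, hij⟩
      exact ⟨hij, blockIndex_insert_of_lt hW hwi⟩
  rw [blockPos, hfibre, Nat.card_Ico]
  omega

/-- The product of `qFact q` over the block sizes, written index by index; over `𝔽_q`,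
`|P_J| = q^(n choose 2) wallProd q n (walls J)`. -/
def wallProd {R : Type*} [CommRing R] (q : R) (n : ℕ) (W : Finset ℕ) : R :=
  ∏ j ∈ range n, (q ^ blockPos (blockIndex W) j - 1)

section
variable {R : Type*} [CommRing R] (q : R)

lemma wallProd_empty (n : ℕ) : wallProd q n ∅ = qFact q n :=
  prod_congr rfl fun j _ => by rw [blockPos_blockIndex_empty]

lemma wallProd_insert (hW : W ⊆ range w) {m : ℕ} (hw : w < m) :
    wallProd q (m + 1) (insert w W) = wallProd q (w + 1) W * qFact q (m - w) := by
  obtain ⟨d, rfl⟩ := Nat.exists_eq_add_of_lt hw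
  rw [wallProd, show w + d + 1 + 1 = (w + 1) + (d + 1) by ring, prod_range_add,
    show w + d + 1 - w = d + 1 by omega]
  refine congrArg₂ (· * ·) (prod_congr rfl fun j hj => ?_) (prod_congr rfl fun t _ => ?_)
  · rw [blockPos_blockIndex_insert_of_le (Nat.lt_succ_iff.mp (mem_range.mp hj))]
  · rw [blockPos_blockIndex_insert_of_lt hW (by omega), show w + 1 + t - w = t + 1 by omega]
end

lemma sum_powerset_range_eq_add_sum_insert {M : Type*} [AddCommMonoid M]
    (f : Finset ℕ → M) (n : ℕ) :
    ∑ W ∈ (range n).powerset, f W =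
      f ∅ + ∑ w ∈ range n, ∑ W ∈ (range w).powerset, f (insert w W) := by
  induction n with
  | zero => simp
  | succ n ih =>
    rw [sum_range_succ, range_add_one, sum_powerset_insert notMem_range_self, ih, add_assoc]

theorem sum_neg_one_pow_div_wallProd {K : Type*} [Field K] {q : K} (hq : ∀ k ≠ 0, q ^ k ≠ 1)
    (m : ℕ) :
    ∑ W ∈ (range m).powerset, (-1) ^ #W / wallProd q (m + 1) W =
      (-1) ^ m * q ^ (m + 1).choose 2 / qFact q (m + 1) := by
  induction m using Nat.strong_induction_on with
  | _ m ih =>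
  set t : ℕ → K := fun j => (-1) ^ j * q ^ j.choose 2 / (qFact q j * qFact q (m + 1 - j))
  have hempty : (-1) ^ #(∅ : Finset ℕ) / wallProd q (m + 1) ∅ = t 0 := by
    simp [t, wallProd_empty]
  have hinsert : ∀ w ∈ range m,
      ∑ W ∈ (range w).powerset, (-1) ^ #(insert w W) / wallProd q (m + 1) (insert w W) =
        t (w + 1) := by
    intro w hw
    have hwm := mem_range.mp hw
    have hterm : ∀ W ∈ (range w).powerset, (-1) ^ #(insert w W) / wallProd q (m + 1) (insert w W)
        = -((-1) ^ #W / wallProd q (w + 1) W) / qFact q (m - w) := by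
      intro W hW
      have hW := mem_powerset.mp hW
      rw [card_insert_of_notMem fun h => (mem_range.mp (hW h)).false, wallProd_insert q hW hwm,
        pow_succ]
      ring
    rw [sum_congr rfl hterm, ← sum_div, sum_neg_distrib, ih w hwm]
    simp only [t, show m + 1 - (w + 1) = m - w by omega]
    ring
  have halt : ∑ j ∈ range (m + 2), t j = 0 := sum_neg_one_pow_div_qFact_mul_qFact hq m
  have hlast : t (m + 1) = (-1) ^ (m + 1) * q ^ (m + 1).choose 2 / qFact q (m + 1) := by
    simp [t]
  rw [sum_range_succ, sum_range_succ', hlast] at halt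
  rw [sum_powerset_range_eq_add_sum_insert, hempty, sum_congr rfl hinsert]
  linear_combination halt

end Walls

section BlockTriangular

open Matrix

noncomputable def unitsSubtypeEquiv {M : Type*} [Monoid M] (p : M → Prop) :
    {u : Mˣ // p u} ≃ {x : M // IsUnit x ∧ p x} where
  toFun u := ⟨u.1, u.1.isUnit, u.2⟩
  invFun x := ⟨x.2.1.unit, x.2.2⟩
  left_inv _ := Subtype.ext (Units.ext rfl)
  right_inv _ := rfl

variable {R : Type*} [CommRing R] {ι α : Type*} [Fintype ι] [LinearOrder α]

lemma _root_.Matrix.BlockTriangular.isUnit_iff [DecidableEq ι] {M : Matrix ι ι R} {b : ι → α}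
    (hM : M.BlockTriangular b) :
    IsUnit M ↔ ∀ c ∈ univ.image b, IsUnit (M.toSquareBlock b c) := by
  simp only [isUnit_iff_isUnit_det M, hM.det, IsUnit.prod_iff, ← isUnit_iff_isUnit_det]

def ofDiagonalBlocks (b : ι → α) (A : ∀ c : univ.image b, Matrix {i // b i = c} {i // b i = c} R)
    (f : {ij : ι × ι // b ij.1 < b ij.2} → R) : Matrix ι ι R := fun i j =>
  if h : b i = b j then A ⟨b j, mem_image_of_mem b (mem_univ j)⟩ ⟨i, h⟩ ⟨j, rfl⟩
  else if h' : b i < b j then f ⟨(i, j), h'⟩ else 0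

section
variable (b : ι → α) (A : ∀ c : univ.image b, Matrix {i // b i = c} {i // b i = c} R)
  (f : {ij : ι × ι // b ij.1 < b ij.2} → R)

lemma blockTriangular_ofDiagonalBlocks : (ofDiagonalBlocks b A f).BlockTriangular b :=
  fun i j hji => by rw [ofDiagonalBlocks, dif_neg hji.ne', dif_neg hji.not_gt]

lemma toSquareBlock_ofDiagonalBlocks (c : univ.image b) :
    (ofDiagonalBlocks b A f).toSquareBlock b c = A c := by
  obtain ⟨c, hc⟩ := c
  ext ⟨i, hi⟩ ⟨j, hj⟩
  dsimp only at hi hj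
  subst hj
  simp [toSquareBlock_def, ofDiagonalBlocks, hi]
end

noncomputable def unitsBlockTriangularEquiv [DecidableEq ι] (b : ι → α) :
    {M : Matrix ι ι R // IsUnit M ∧ M.BlockTriangular b} ≃
      (∀ c : univ.image b, GL {i // b i = c} R) × ({ij : ι × ι // b ij.1 < b ij.2} → R) where
  toFun M := (fun c => ((M.2.2.isUnit_iff.mp M.2.1) c c.2).unit, fun ij => M.1 ij.1.1 ij.1.2)
  invFun Af := ⟨ofDiagonalBlocks b (fun c => Af.1 c) Af.2,
    ((blockTriangular_ofDiagonalBlocks b _ _).isUnit_iff.mpr fun c hc => by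
      rw [toSquareBlock_ofDiagonalBlocks b _ _ ⟨c, hc⟩]
      exact (Af.1 _).isUnit),
    blockTriangular_ofDiagonalBlocks b _ _⟩
  left_inv M := by
    ext i j
    simp only [ofDiagonalBlocks]
    split_ifs with h h'
    · simp [toSquareBlock_def]
    · rfl
    · exact (M.2.2 (lt_of_le_of_ne (not_lt.mp h') (Ne.symm h))).symm
  right_inv Af := by
    refine Prod.ext (funext fun c => Units.ext ?_) (funext fun ij => ?_)
    · exact toSquareBlock_ofDiagonalBlocks b (fun c => (Af.1 c : Matrix _ _ R)) Af.2 c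
    · exact (dif_neg ij.2.ne).trans (dif_pos ij.2)

lemma card_subtype_lt_eq_sum {ι α : Type*} [Fintype ι] [LinearOrder α] (b : ι → α) :
    Nat.card {ij : ι × ι // b ij.1 < b ij.2} = ∑ j, #{i | b i < b j} := by
  rw [Nat.card_eq_fintype_card, Fintype.card_subtype, card_filter, Fintype.sum_prod_type_right]
  simp only [card_filter]

theorem card_units_blockTriangular [DecidableEq ι] [Fintype R] (b : ι → α) :
    Nat.card {M : Matrix ι ι R // IsUnit M ∧ M.BlockTriangular b} =
      (∏ c ∈ univ.image b, Nat.card (GL {i // b i = c} R)) *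
        Fintype.card R ^ Nat.card {ij : ι × ι // b ij.1 < b ij.2} := by
  rw [Nat.card_congr (unitsBlockTriangularEquiv b), Nat.card_prod, Nat.card_pi, Nat.card_fun,
    Nat.card_eq_fintype_card (α := R), prod_coe_sort (univ.image b)
      (fun c => Nat.card (GL {i // b i = c} R))]

end BlockTriangular

section FiniteField

open Matrix

variable {F : Type*} [Field F] [Fintype F] {S : Type*} [CommRing S]

lemma prod_range_pow_sub_pow (x : S) (m : ℕ) :
    ∏ t ∈ range m, (x ^ m - x ^ t) = ∏ t ∈ range m, x ^ t * (x ^ (t + 1) - 1) := by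
  have hsplit : ∀ t ∈ range m, x ^ m - x ^ t = x ^ t * (x ^ (m - 1 - t + 1) - 1) := fun t ht => by
    rw [mul_sub, mul_one, ← pow_add, show t + (m - 1 - t + 1) = m by
      have := mem_range.mp ht; omega]
  rw [prod_congr rfl hsplit, prod_mul_distrib, prod_mul_distrib,
    prod_range_reflect (fun t => x ^ (t + 1) - 1)]

lemma card_GL_eq_prod (κ : Type*) [Fintype κ] [DecidableEq κ] :
    (Nat.card (GL κ F) : S) =
      ∏ t ∈ range (Fintype.card κ),
        (Fintype.card F : S) ^ t * ((Fintype.card F : S) ^ (t + 1) - 1) := by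
  let e : Matrix κ κ F ≃* Matrix (Fin (Fintype.card κ)) (Fin (Fintype.card κ)) F :=
    (reindexAlgEquiv F F (Fintype.equivFin κ)).toMulEquiv
  rw [Nat.card_congr (Units.mapEquiv e).toEquiv, card_GL_field, Nat.cast_prod,
    Fin.prod_univ_eq_prod_range
      (fun t => ((Fintype.card F ^ Fintype.card κ - Fintype.card F ^ t : ℕ) : S)),
    ← prod_range_pow_sub_pow]
  refine prod_congr rfl fun t ht => ?_
  rw [Nat.cast_sub (Nat.pow_le_pow_right Fintype.card_pos (mem_range.mp ht).le), Nat.cast_pow,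
    Nat.cast_pow]

theorem card_units_blockTriangular_fin {α : Type*} [LinearOrder α] {b : ℕ → α} (hb : Monotone b)
    (N : ℕ) :
    (Nat.card {M : Matrix (Fin N) (Fin N) F // IsUnit M ∧ M.BlockTriangular fun i => b i} : S) =
      ∏ j ∈ range N, (Fintype.card F : S) ^ j * ((Fintype.card F : S) ^ blockPos b j - 1) := by
  set q : S := (Fintype.card F : S) with hq
  have hfibre : ∀ c ∈ univ.image fun i : Fin N => b i,
      (Nat.card (GL {i : Fin N // b i = c} F) : S) =
        ∏ j ∈ univ.filter (fun j : Fin N => b j = c),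
          q ^ (blockPos b j - 1) * (q ^ blockPos b j - 1) := by
    intro c _
    rw [card_GL_eq_prod, Fintype.card_subtype,
      prod_fibre_blockPos (fun s => q ^ (s - 1) * (q ^ s - 1))]
    rfl
  have hexp : ∀ j : Fin N, #{i : Fin N | b i < b j} + (blockPos b j - 1) = j := fun j => by
    have := card_lt_add_blockPos hb j.2
    have := blockPos_pos b j
    omega
  rw [card_units_blockTriangular, Nat.cast_mul, Nat.cast_prod, prod_congr rfl hfibre,
    prod_fiberwise_of_maps_to fun j _ => mem_image_of_mem _ (mem_univ j), Nat.cast_pow, ← hq,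
    card_subtype_lt_eq_sum (fun i : Fin N => b i), ← prod_pow_eq_pow_sum, ← prod_mul_distrib,
    ← Fin.prod_univ_eq_prod_range (fun j => q ^ j * (q ^ blockPos b j - 1))]
  refine prod_congr rfl fun j _ => ?_
  rw [mul_right_comm, ← pow_add, Nat.add_comm, hexp]

end FiniteField

section Parabolic

open Matrix

def walls {m : ℕ} (J : Finset (Fin m)) : Finset ℕ := Jᶜ.map Fin.valEmbedding

lemma sum_walls {M : Type*} [AddCommMonoid M] (m : ℕ) (f : Finset ℕ → M) :
    ∑ J : Finset (Fin m), f (walls J) = ∑ W ∈ (range m).powerset, f W := by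
  refine sum_nbij' walls (fun W => univ.filter fun i : Fin m => (i : ℕ) ∉ W) (fun J _ => ?_)
    (fun _ _ => mem_univ _) (fun J _ => ?_) (fun W hW => ?_) (fun _ _ => rfl)
  · simp [walls, subset_iff]
  · ext i
    simp [walls, Fin.val_inj]
  · ext x
    have := @mem_powerset.mp hW x
    simp only [walls, mem_map, mem_compl, mem_filter, mem_univ, true_and, not_not,
      Fin.valEmbedding_apply, mem_range] at this ⊢
    exact ⟨fun ⟨i, hi, hix⟩ => hix ▸ hi, fun hx => ⟨⟨x, this hx⟩, hx, rfl⟩⟩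

lemma card_add_card_walls {m : ℕ} (J : Finset (Fin m)) : #J + #(walls J) = m := by
  have := card_le_univ J
  rw [Fintype.card_fin] at this
  rw [walls, card_map, card_compl, Fintype.card_fin]
  omega

theorem sum_neg_one_pow_mul_qFact_div_wallProd {K : Type*} [Field K] {q : K}
    (hq : ∀ k ≠ 0, q ^ k ≠ 1) (n : ℕ) :
    ∑ J : Finset (Fin (n - 1)), (-1) ^ #J * (qFact q n / wallProd q n (walls J)) =
      q ^ n.choose 2 := by
  have hterm : ∀ J : Finset (Fin (n - 1)), (-1) ^ #J * (qFact q n / wallProd q n (walls J)) =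
      (-1) ^ (n - 1) * qFact q n * ((-1) ^ #(walls J) / wallProd q n (walls J)) := fun J => by
    have hsq : ((-1 : K) ^ #(walls J)) ^ 2 = 1 := by rw [← pow_mul, pow_mul', neg_one_sq, one_pow]
    have hsign : (-1 : K) ^ (n - 1) = (-1) ^ #J * (-1) ^ #(walls J) := by
      rw [← pow_add, card_add_card_walls]
    rw [hsign]
    linear_combination (-(-1) ^ #J * qFact q n / wallProd q n (walls J)) * hsq
  rw [sum_congr rfl fun J _ => hterm J, ← mul_sum,
    sum_walls (n - 1) fun W => (-1) ^ #W / wallProd q n W]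
  rcases n with _ | m
  · simp [wallProd]
  · rw [Nat.add_sub_cancel, sum_neg_one_pow_div_wallProd hq m]
    have := qFact_ne_zero hq (m + 1)
    field_simp
    rw [← pow_mul, pow_mul', neg_one_sq, one_pow, one_mul]

variable {F : Type*} [Field F] {n : ℕ} {J : Finset (Fin (n - 1))}

lemma separated_iff_blockIndex_lt {i j : Fin n} (h : j < i) :
    Separated n J i j ↔ blockIndex (walls J) j < blockIndex (walls J) i := by
  rw [blockIndex_lt_blockIndex_iff (Fin.le_def.mp h.le), Separated,
    min_eq_right (Fin.le_def.mp h.le), max_eq_left (Fin.le_def.mp h.le)]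
  simp [walls]

lemma mem_P_iff_blockTriangular (A : GL (Fin n) F) :
    A ∈ P n J ↔ (A : Matrix (Fin n) (Fin n) F).BlockTriangular fun i => blockIndex (walls J) i := by
  refine ⟨fun hA i j hij => ?_,
    fun hA i j hji hsep => hA ((separated_iff_blockIndex_lt hji).mp hsep)⟩
  have hji : j < i := lt_of_not_ge fun hle => hij.not_ge (blockIndex_mono (Fin.le_def.mp hle))
  exact hA i j hji ((separated_iff_blockIndex_lt hji).mpr hij)

theorem card_GL_div_card_P [Fintype F] {K : Type*} [Field K] [CharZero K] :
    (Nat.card (GL (Fin n) F) : K) / Nat.card (P n J (F := F)) =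
      qFact (Fintype.card F : K) n / wallProd (Fintype.card F : K) n (walls J) := by
  have hP : Nat.card (P n J (F := F)) = Nat.card {M : Matrix (Fin n) (Fin n) F //
      IsUnit M ∧ M.BlockTriangular fun i => blockIndex (walls J) i} :=
    Nat.card_congr ((Equiv.subtypeEquivRight mem_P_iff_blockTriangular).trans
      (unitsSubtypeEquiv fun M : Matrix (Fin n) (Fin n) F =>
        M.BlockTriangular fun i => blockIndex (walls J) i))
  have hq : ∏ j ∈ range n, (Fintype.card F : K) ^ j ≠ 0 :=
    prod_ne_zero_iff.mpr fun j _ => pow_ne_zero _ (Nat.cast_ne_zero.mpr Fintype.card_ne_zero)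
  rw [hP, card_units_blockTriangular_fin blockIndex_mono, card_GL_eq_prod, Fintype.card_fin,
    prod_mul_distrib, prod_mul_distrib, mul_div_mul_left _ _ hq, qFact, wallProd]

end Parabolic

end ParabolicGL

open ParabolicGL

theorem solomon_identity_GL_general (p e n : ℕ) [Fact p.Prime] (he : 0 < e) :
    ∑ J : Finset (Fin (n - 1)),
        (-1 : ℚ) ^ J.card *
          ((Nat.card (Matrix.GeneralLinearGroup (Fin n) (GaloisField p e)) : ℚ) /
            (Nat.card (P n J (F := GaloisField p e)) : ℚ)) =
      ((p : ℚ) ^ e) ^ (n * (n - 1) / 2) := by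
  let _ : Fintype (GaloisField p e) := Fintype.ofFinite _
  have hcard : Fintype.card (GaloisField p e) = p ^ e := by
    rw [← Nat.card_eq_fintype_card, GaloisField.card p e he.ne']
  have hq : ∀ k ≠ 0, ((p ^ e : ℕ) : ℚ) ^ k ≠ 1 := fun k hk =>
    (one_lt_pow₀ (by exact_mod_cast Nat.one_lt_pow he.ne' (Fact.out : p.Prime).one_lt) hk).ne'
  simp_rw [card_GL_div_card_P (K := ℚ), hcard]
  rw [sum_neg_one_pow_mul_qFact_div_wallProd hq, Nat.choose_two_right, Nat.cast_pow]

/-- **Solomon's identity for `GL(n, F_q)`:**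
`∑_{J ⊆ Π} (-1)^{|J|} |GL(n,F_q) : P_J| = q^{n(n-1)/2}`, the sum over all subsets `J`
of the `n - 1` fundamental roots, `P_J` the corresponding standard parabolic. -/
theorem solomon_identity_GL (p e n : ℕ) [Fact p.Prime] (he : 0 < e) (hn : 1 ≤ n) :
    ∑ J : Finset (Fin (n - 1)),
        (-1 : ℚ) ^ J.card *
          ((Nat.card (Matrix.GeneralLinearGroup (Fin n) (GaloisField p e)) : ℚ) /
            (Nat.card (P n J (F := GaloisField p e)) : ℚ)) =
      ((p : ℚ) ^ e) ^ (n * (n - 1) / 2) :=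
  solomon_identity_GL_general p e n he
end

section
/- The inverse q-multinomial identity: for every integer m ≥ 1, Σ over all ordered compositions (m_1,...,m_k) of m of (-1)^k · ([m](q)!/([m_1](q)!···[m_k](q)!)) · q^{Σ_i binomial(m_i,2)} equals (-1)^m, as polynomials in q. -/
/-!
Splitting off the first block `a + 1` of a composition of `n + 1` factors the summand as
`-[n+1 choose a+1]_q q^C(a+1,2)` times the summand of the remaining composition of `n - a`.
Hence the sum `S n` satisfies `S (n + 1) = -∑ₐ [n+1 choose a+1]_q q^C(a+1,2) S (n - a)`, and
`S n = (-1)^n` follows by strong induction from the q-binomial identity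
`∑ⱼ (-1)^j q^C(j,2) [N choose j]_q = 0` for `N ≥ 1` (the case `x = -1` of Gauss's
`∏_{i<N} (1 + x q^i) = ∑ⱼ q^C(j,2) [N choose j]_q x^j`), whose partial sums telescope by
q-Pascal.
-/

open Finset

section QAnalogues

variable {R : Type*}

def qNum [CommSemiring R] (q : R) (d : ℕ) : R := ∑ i ∈ range d, q ^ i

def qFact [CommSemiring R] (q : R) (d : ℕ) : R := ∏ j ∈ range d, qNum q (j + 1)

theorem qNum_add [CommSemiring R] (q : R) (a b : ℕ) :
    qNum q (a + b) = qNum q a + q ^ a * qNum q b := by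
  simp only [qNum, sum_range_add, mul_sum, pow_add]

@[simp] theorem qFact_zero [CommSemiring R] (q : R) : qFact q 0 = 1 := prod_range_zero _

theorem qFact_succ [CommSemiring R] (q : R) (d : ℕ) :
    qFact q (d + 1) = qFact q d * qNum q (d + 1) := prod_range_succ _ _

theorem qFact_ratFuncX_ne_zero {K : Type*} [Field K] (d : ℕ) :
    qFact (RatFunc.X : RatFunc K) d ≠ 0 := by
  refine prod_ne_zero_iff.2 fun j _ => ?_
  have hmap : qNum (RatFunc.X : RatFunc K) (j + 1) =
      algebraMap (Polynomial K) (RatFunc K) (qNum Polynomial.X (j + 1)) := by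
    simp [qNum, RatFunc.algebraMap_X]
  rw [hmap, Ne, map_eq_zero_iff _ (IsFractionRing.injective _ _)]
  intro h
  simpa [qNum, sum_range_succ', Polynomial.eval_finsetSum] using congrArg (Polynomial.eval 0) h

variable [Field R] {q : R}

def qChoose (q : R) (n k : ℕ) : R := qFact q n / (qFact q k * qFact q (n - k))

theorem qChoose_zero_right (hq : ∀ d, qFact q d ≠ 0) (n : ℕ) : qChoose q n 0 = 1 := by
  simp [qChoose, hq]

theorem qChoose_self (hq : ∀ d, qFact q d ≠ 0) (n : ℕ) : qChoose q n n = 1 := by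
  simp [qChoose, hq]

theorem qChoose_succ_succ (hq : ∀ d, qFact q d ≠ 0) {n k : ℕ} (hk : k < n) :
    qChoose q (n + 1) (k + 1) = qChoose q n k + q ^ (k + 1) * qChoose q n (k + 1) := by
  obtain ⟨b, rfl⟩ : ∃ b, n = k + 1 + b := ⟨n - (k + 1), by omega⟩
  have hnum (d : ℕ) : qNum q (d + 1) ≠ 0 :=
    right_ne_zero_of_mul (qFact_succ q d ▸ hq (d + 1))
  have hpascal : qNum q (k + 1 + b + 1) = qNum q (k + 1) + q ^ (k + 1) * qNum q (b + 1) := by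
    rw [add_assoc, qNum_add]
  rw [qChoose, qChoose, qChoose, show k + 1 + b + 1 - (k + 1) = b + 1 by omega,
    show k + 1 + b - k = b + 1 by omega, show k + 1 + b - (k + 1) = b by omega,
    qFact_succ q (k + 1 + b), qFact_succ q k, qFact_succ q b, hpascal]
  have := hq k; have := hq b; have := hq (k + 1 + b); have := hnum k; have := hnum b
  field_simp

theorem sum_range_alternating_qChoose_partial (hq : ∀ d, qFact q d ≠ 0) {n k : ℕ}
    (hk : k ≤ n) :
    ∑ j ∈ range (k + 1), (-1) ^ j * q ^ j.choose 2 * qChoose q (n + 1) j =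
      (-1) ^ k * q ^ (k + 1).choose 2 * qChoose q n k := by
  induction k with
  | zero => simp [qChoose_zero_right hq]
  | succ k ih =>
    rw [sum_range_succ, ih (by omega), qChoose_succ_succ hq (by omega),
      show (k + 2).choose 2 = (k + 1).choose 2 + (k + 1) by simp [Nat.choose_succ_succ]; ring]
    ring

theorem sum_range_alternating_qChoose (hq : ∀ d, qFact q d ≠ 0) (n : ℕ) :
    ∑ j ∈ range (n + 2), (-1) ^ j * q ^ j.choose 2 * qChoose q (n + 1) j = 0 := by
  rw [sum_range_succ, sum_range_alternating_qChoose_partial hq le_rfl, qChoose_self hq,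
    qChoose_self hq, pow_succ]
  ring

end QAnalogues

namespace Composition

theorem heq_of_blocks_eq {m n : ℕ} {c : Composition m} {d : Composition n}
    (h : c.blocks = d.blocks) : c ≍ d :=
  (Sigma.mk.inj_iff.1 (sigma_eq_iff_blocks_eq (c := ⟨m, c⟩) (c' := ⟨n, d⟩) |>.2 h)).2

theorem blocks_ne_nil {n : ℕ} (c : Composition (n + 1)) : c.blocks ≠ [] := by
  simp [blocks_eq_nil]

def consEquiv (n : ℕ) : (Σ a : Fin (n + 1), Composition (n - a)) ≃ Composition (n + 1) where
  toFun p :=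
    { blocks := (p.1 + 1) :: p.2.blocks
      blocks_pos := by
        simp only [List.mem_cons, forall_eq_or_imp]
        exact ⟨Nat.succ_pos _, fun _ => p.2.blocks_pos⟩
      blocks_sum := by simp [p.2.blocks_sum]; omega }
  invFun c :=
    have hsum : c.blocks.head c.blocks_ne_nil + c.blocks.tail.sum = n + 1 := by
      rw [← List.sum_cons, List.cons_head_tail, c.blocks_sum]
    have hpos : 0 < c.blocks.head c.blocks_ne_nil := c.blocks_pos (List.head_mem _)
    ⟨⟨c.blocks.head c.blocks_ne_nil - 1, by omega⟩,
      { blocks := c.blocks.tail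
        blocks_pos := fun h => c.blocks_pos (List.mem_of_mem_tail h)
        blocks_sum := by simp only; omega }⟩
  left_inv := by
    rintro ⟨a, c⟩
    exact Sigma.ext (by simp) (heq_of_blocks_eq rfl)
  right_inv c := by
    ext1
    have hpos : 0 < c.blocks.head c.blocks_ne_nil := c.blocks_pos (List.head_mem _)
    conv_rhs => rw [← List.cons_head_tail c.blocks_ne_nil]
    simp only [List.cons.injEq, and_true]
    omega

@[simp] theorem consEquiv_blocks {n : ℕ} (p : Σ a : Fin (n + 1), Composition (n - a)) :
    (consEquiv n p).blocks = ((p.1 : ℕ) + 1) :: p.2.blocks := rfl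

end Composition

section SignedQMultinomial

variable {R : Type*} [Field R] {q : R}

def signedQMultinomial (q : R) {n : ℕ} (c : Composition n) : R :=
  (-1) ^ c.length * (qFact q n / (c.blocks.map (qFact q)).prod) *
    q ^ (c.blocks.map fun b => b.choose 2).sum

def sumSignedQMultinomial (q : R) (n : ℕ) : R := ∑ c : Composition n, signedQMultinomial q c

theorem signedQMultinomial_consEquiv (hq : ∀ d, qFact q d ≠ 0) {n : ℕ}
    (p : Σ a : Fin (n + 1), Composition (n - a)) :
    signedQMultinomial q (Composition.consEquiv n p) =
      -(qChoose q (n + 1) (p.1 + 1) * q ^ (p.1 + 1 : ℕ).choose 2) * signedQMultinomial q p.2 := by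
  obtain ⟨a, c⟩ := p
  have hprod : (c.blocks.map (qFact q)).prod ≠ 0 := by simp [hq]
  have := hq (a + 1); have := hq (n + 1); have := hq (n - a)
  simp only [signedQMultinomial, qChoose, Composition.length, Composition.consEquiv_blocks,
    List.length_cons, List.map_cons, List.prod_cons, List.sum_cons, Nat.add_sub_add_right]
  field_simp
  ring

theorem sumSignedQMultinomial_zero : sumSignedQMultinomial q 0 = 1 := by
  have hblocks (c : Composition 0) : c.blocks = [] := c.blocks_eq_nil.2 rfl
  simp [sumSignedQMultinomial, signedQMultinomial, Composition.length, hblocks, composition_card]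

theorem sumSignedQMultinomial_succ (hq : ∀ d, qFact q d ≠ 0) (n : ℕ) :
    sumSignedQMultinomial q (n + 1) = -∑ a ∈ range (n + 1),
      qChoose q (n + 1) (a + 1) * q ^ (a + 1).choose 2 * sumSignedQMultinomial q (n - a) := by
  rw [sumSignedQMultinomial, ← (Composition.consEquiv n).sum_comp, ← univ_sigma_univ, sum_sigma,
    ← Fin.sum_univ_eq_sum_range (fun a => qChoose q (n + 1) (a + 1) * q ^ (a + 1).choose 2 *
      sumSignedQMultinomial q (n - a)), ← sum_neg_distrib]
  refine sum_congr rfl fun a _ => ?_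
  simp only [signedQMultinomial_consEquiv hq, ← mul_sum, sumSignedQMultinomial]
  ring

theorem sumSignedQMultinomial_eq (hq : ∀ d, qFact q d ≠ 0) (n : ℕ) :
    sumSignedQMultinomial q n = (-1) ^ n := by
  induction n using Nat.strong_induction_on with
  | _ n ih =>
    rcases n with _ | n
    · rw [pow_zero]; exact sumSignedQMultinomial_zero
    rw [sumSignedQMultinomial_succ hq]
    have hsigns : ∀ a ∈ range (n + 1), qChoose q (n + 1) (a + 1) * q ^ (a + 1).choose 2 *
        sumSignedQMultinomial q (n - a) = (-1 : R) ^ (n + 1) *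
          ((-1) ^ (a + 1) * q ^ (a + 1).choose 2 * qChoose q (n + 1) (a + 1)) := by
      intro a ha
      have hsign : (-1 : R) ^ (n - a) = (-1) ^ (n + 1) * (-1) ^ (a + 1) := by
        have hle : a ≤ n := Nat.lt_succ_iff.1 (mem_range.1 ha)
        rw [← pow_add, show n + 1 + (a + 1) = n - a + 2 * (a + 1) by omega, pow_add, pow_mul,
          neg_one_sq, one_pow, mul_one]
      rw [ih (n - a) (by omega), hsign]
      ring
    have hvanish : ∑ a ∈ range (n + 1),
        (-1 : R) ^ (a + 1) * q ^ (a + 1).choose 2 * qChoose q (n + 1) (a + 1) = -1 := by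
      have h := sum_range_alternating_qChoose hq n
      rw [sum_range_succ', qChoose_zero_right hq] at h
      norm_num at h
      linear_combination h
    rw [sum_congr rfl hsigns, ← mul_sum, hvanish]
    ring

end SignedQMultinomial

theorem q_multinomial_inverse_identity_general (m : ℕ) :
    letI X : RatFunc ℚ := RatFunc.X
    letI qb : ℕ → RatFunc ℚ := fun d => ∑ i ∈ Finset.range d, X ^ i
    letI qfact : ℕ → RatFunc ℚ := fun d => ∏ j ∈ Finset.range d, qb (j + 1)
    ∑ c : Composition m,
        (-1 : RatFunc ℚ) ^ c.length * (qfact m / (c.blocks.map qfact).prod) *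
          X ^ (c.blocks.map fun b => b.choose 2).sum =
      (-1 : RatFunc ℚ) ^ m :=
  sumSignedQMultinomial_eq qFact_ratFuncX_ne_zero m

/-- **The inverse q-multinomial identity** (Möbius inverse of Solomon's identity for
root system `A_{m-1}`).  For `m ≥ 1`, summing over all ordered compositions
`(m₁, …, m_k)` of `m`:
`∑ (-1)^k ([m]!(q)/([m₁]!(q) ⋯ [m_k]!(q))) · q^(∑ᵢ C(mᵢ,2)) = (-1)^m`,
where `[d](q) = 1 + q + ⋯ + q^(d-1)` and `[d]!(q) = [1](q)[2](q)⋯[d](q)`. -/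
theorem q_multinomial_inverse_identity (m : ℕ) (hm : 1 ≤ m) :
    letI X : RatFunc ℚ := RatFunc.X
    letI qb : ℕ → RatFunc ℚ := fun d => ∑ i ∈ Finset.range d, X ^ i
    letI qfact : ℕ → RatFunc ℚ := fun d => ∏ j ∈ Finset.range d, qb (j + 1)
    ∑ c : Composition m,
        (-1 : RatFunc ℚ) ^ c.length * (qfact m / (c.blocks.map qfact).prod) *
          X ^ (c.blocks.map fun b => b.choose 2).sum =
      (-1 : RatFunc ℚ) ^ m :=
  q_multinomial_inverse_identity_general m
end
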